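/- arXiv:2002.07912 — 6 statements merged into one kernel-verified Lean document; each statement's English description precedes it below -/
import Mathlib

section
/- Let d, s, k ∈ ℕ with 2k + 1 ≥ s. Then the number of v ∈ △_{d,s}^ℤ with max_i v_i ≤ k equals binomial(d+s, d) − (d+1)·binomial(d+s−(k+1), d), where binomial(n, r) is taken to be 0 when r > n or n < 0. -/
/-- The binomial coefficient with an integer upper argument, defined to be `0`
when the upper argument is negative (and `0` when `k` exceeds it, via `Nat.choose`). -/
def zchoose (n : ℤ) (k : ℕ) : ℤ := if 0 ≤ n then (n.toNat.choose k : ℤ) else 0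

lemma card_sum_eq (N s : ℕ) :
    Nat.card {v : Fin N → ℕ // ∑ i, v i = s} = Nat.multichoose N s := by
  rw [← Nat.card_congr (Sym.equivNatSumOfFintype (Fin N) s), Nat.card_eq_fintype_card,
    Sym.card_sym_fin_eq_multichoose]

lemma multichoose_eq_choose (d s : ℕ) :
    Nat.multichoose (d + 1) s = (d + s).choose d := by
  rw [Nat.multichoose_eq]
  have h1 : d + 1 + s - 1 = d + s := by omega
  rw [h1, ← Nat.choose_symm (by omega : s ≤ d + s)]
  congr 1
  omega

lemma bad_card (d s k m : ℕ) (h : s ≤ 2 * k + 1) (hm : s = m + (k + 1)) :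
    Nat.card {v : Fin (d + 1) → ℕ // (∑ i, v i = s) ∧ ¬ ∀ i, v i ≤ k} =
      (d + 1) * Nat.multichoose (d + 1) m := by
  have key : ∀ (v : Fin (d+1) → ℕ), (∑ i, v i = s) → ∀ i j, k + 1 ≤ v i → k + 1 ≤ v j →
      i = j := by
    intro v hv i j hi hj
    by_contra hij
    have : v i + v j ≤ s := by
      rw [← hv, ← Finset.sum_pair hij]
      exact Finset.sum_le_sum_of_subset (Finset.subset_univ _)
    omega
  set F : Fin (d + 1) × {w : Fin (d + 1) → ℕ // ∑ i, w i = m} →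
      {v : Fin (d + 1) → ℕ // (∑ i, v i = s) ∧ ¬ ∀ i, v i ≤ k} :=
    fun p => ⟨fun j => p.2.1 j + if j = p.1 then k + 1 else 0, by
      constructor
      · rw [Finset.sum_add_distrib, p.2.2, Finset.sum_ite_eq' Finset.univ p.1 (fun _ => k+1)]
        simp [hm]
      · intro hall
        have := hall p.1
        simp at this
        omega⟩ with hF
  have hbij : Function.Bijective F := by
    constructor
    · rintro ⟨i, w, hw⟩ ⟨i', w', hw'⟩ hEq
      have hfun : ∀ j, w j + (if j = i then k + 1 else 0) =
          w' j + (if j = i' then k + 1 else 0) := fun j => congrFun (congrArg Subtype.val hEq) j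
      have hsum : ∑ j, (w j + if j = i then k + 1 else 0) = s := (F (i, ⟨w, hw⟩)).2.1
      have hii : i = i' := by
        apply key _ hsum
        · simp
        · have := hfun i'; simp at this ⊢; omega
      subst hii
      refine Prod.ext rfl (Subtype.ext (funext fun j => ?_))
      show w j = w' j
      have := hfun j
      omega
    · rintro ⟨v, hv, hbad⟩
      push_neg at hbad
      obtain ⟨i, hi⟩ := hbad
      refine ⟨⟨i, fun j => v j - if j = i then k + 1 else 0, ?_⟩, ?_⟩
      · show ∑ j, (v j - if j = i then k + 1 else 0) = m
        have h2 : ∑ j, ((v j - if j = i then k + 1 else 0) + (if j = i then k + 1 else 0))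
            = s := by
          rw [← hv]
          refine Finset.sum_congr rfl fun j _ => ?_
          by_cases hj : j = i <;> simp [hj] <;> omega
        rw [Finset.sum_add_distrib] at h2
        have h3 : ∑ j, (if j = i then k + 1 else 0) = k + 1 := by
          simp [Finset.sum_ite_eq']
        omega
      · apply Subtype.ext
        funext j
        simp only [hF]
        by_cases hj : j = i <;> simp [hj] <;> omega
  rw [← Nat.card_congr (Equiv.ofBijective F hbij), Nat.card_prod, Nat.card_eq_fintype_card,
    Fintype.card_fin, card_sum_eq]

/-- Let `2k + 1 ≥ s`. The number of `v ∈ △_{d,s}^ℤ` with `max_i v_i ≤ k` equals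
`C(d+s, d) − (d+1) · C(d+s−(k+1), d)`, binomials being `0` outside the standard range. -/
theorem simplex_points_in_radius (d s k : ℕ) (h : s ≤ 2 * k + 1) :
    (Nat.card {v : Fin (d + 1) → ℕ // (∑ i, v i = s) ∧ ∀ i, v i ≤ k} : ℤ) =
      ((d + s).choose d : ℤ) - (d + 1) * zchoose ((d : ℤ) + s - (k + 1)) d := by
  unfold zchoose
  set P : (Fin (d+1) → ℕ) → Prop := fun v => ∑ i, v i = s with hP
  set Q : (Fin (d+1) → ℕ) → Prop := fun v => ∀ i, v i ≤ k with hQ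
  show (Nat.card {v // P v ∧ Q v} : ℤ) = _
  have hfinAll : Finite {v // P v} := Finite.of_equiv _ (Sym.equivNatSumOfFintype (Fin (d+1)) s)
  have hfinG : Finite {v // P v ∧ Q v} :=
    Finite.of_injective (fun x => (⟨x.1, x.2.1⟩ : {v // P v})) (by
      rintro ⟨a, _⟩ ⟨b, _⟩ hab; simpa using congrArg Subtype.val hab)
  have hfinB : Finite {v // P v ∧ ¬ Q v} :=
    Finite.of_injective (fun x => (⟨x.1, x.2.1⟩ : {v // P v})) (by
      rintro ⟨a, _⟩ ⟨b, _⟩ hab; simpa using congrArg Subtype.val hab)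
  classical
  have e : {v // P v ∧ Q v} ⊕ {v // P v ∧ ¬ Q v} ≃ {v // P v} :=
    (Equiv.sumCongr (Equiv.subtypeSubtypeEquivSubtypeInter P Q).symm
      (Equiv.subtypeSubtypeEquivSubtypeInter P (fun v => ¬ Q v)).symm).trans
      (Equiv.sumCompl (fun x : {v // P v} => Q x.1))
  have hsplit : Nat.card {v // P v ∧ Q v} + Nat.card {v // P v ∧ ¬ Q v} =
      (d + s).choose d := by
    rw [← multichoose_eq_choose, ← card_sum_eq, ← Nat.card_congr e, Nat.card_sum]
  by_cases hs : k + 1 ≤ s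
  · obtain ⟨m, hm⟩ : ∃ m, s = m + (k + 1) := ⟨s - (k + 1), by omega⟩
    have hB := bad_card d s k m h hm
    have hpos : 0 ≤ (d : ℤ) + s - (k + 1) := by clear * - hs; omega
    rw [if_pos hpos]
    have htn : ((d : ℤ) + s - (k + 1)).toNat = d + m := by clear * - hm; omega
    rw [htn]
    rw [hB, multichoose_eq_choose] at hsplit
    push_cast [← hsplit]
    ring
  · have hBempty : Nat.card {v // P v ∧ ¬ Q v} = 0 := by
      have : IsEmpty {v // P v ∧ ¬ Q v} := by
        constructor
        rintro ⟨v, hv, hnq⟩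
        apply hnq
        intro i
        have : v i ≤ s := hv ▸ Finset.single_le_sum (fun j _ => Nat.zero_le (v j))
          (Finset.mem_univ i)
        omega
      exact Nat.card_of_isEmpty
    have hz : (if 0 ≤ ((d : ℤ) + s - (k + 1)) then ((((d : ℤ) + s - (k + 1)).toNat.choose d : ℤ)) else 0) = 0 := by
      split_ifs with hpos
      · have hlt : ((d : ℤ) + s - (k + 1)).toNat < d := by clear * - hs hpos; omega
        rw [Nat.choose_eq_zero_of_lt hlt]; norm_num
      · rfl
    rw [hBempty] at hsplit
    rw [hz]
    simp only [mul_zero, sub_zero]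
    clear * - hsplit
    omega
end

section
/- Let d, s, k ∈ ℕ with 2k + 1 ≥ s, and let l ∈ ℕ₀. Then the number of v ∈ △_{d,s}^ℤ whose support has size l + 1 and with max_i v_i ≤ k equals binomial(d+1, l+1) · ( binomial(s−1, l) − (l+1)·binomial(s−1−k, l) ). -/
open Finset

lemma finite_of_bounded {m n : ℕ} {p : (Fin m → ℕ) → Prop}
    (hp : ∀ w, p w → ∀ i, w i ≤ n) : Finite {w : Fin m → ℕ // p w} := by
  refine Finite.of_injective
    (fun w => (fun i => (⟨w.1 i, Nat.lt_succ_of_le (hp w.1 w.2 i)⟩ : Fin (n + 1)))) ?_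
  intro a b hab
  ext i
  have := congrFun hab i
  simpa using congrArg Fin.val this

lemma le_of_mem_sum {m n : ℕ} {w : Fin m → ℕ} (h : ∑ i, w i = n) (i : Fin m) : w i ≤ n :=
  h ▸ Finset.single_le_sum (fun _ _ => Nat.zero_le _) (mem_univ i)

instance instFinW (m n : ℕ) : Finite {w : Fin m → ℕ // ∑ i, w i = n} :=
  finite_of_bounded (fun w hw => le_of_mem_sum hw)

lemma card_weak (m n : ℕ) :
    Nat.card {w : Fin m → ℕ // ∑ i, w i = n} = (m + n - 1).choose n := by
  have e : {w : Fin m → ℕ // ∑ i, w i = n} ≃ Sym (Fin m) n := by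
    refine Equiv.subtypeEquiv
      (Finsupp.equivFunOnFinite.symm.trans Multiset.toFinsupp.symm.toEquiv) fun w => ?_
    show _ ↔ Multiset.card (Finsupp.toMultiset (Finsupp.equivFunOnFinite.symm w)) = n
    rw [Finsupp.card_toMultiset, Finsupp.sum_fintype _ _ (fun i => rfl)]
    exact Iff.rfl
  rw [Nat.card_congr e, Nat.card_eq_fintype_card, Sym.card_sym_fin_eq_multichoose,
    Nat.multichoose_eq]

lemma card_pos (l n : ℕ) (hn : 1 ≤ n) :
    Nat.card {w : Fin (l + 1) → ℕ // ∑ i, w i = n ∧ ∀ i, 0 < w i} = (n - 1).choose l := by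
  haveI : Finite {w : Fin (l + 1) → ℕ // ∑ i, w i = n ∧ ∀ i, 0 < w i} :=
    finite_of_bounded (fun w hw => le_of_mem_sum hw.1)
  by_cases hln : l + 1 ≤ n
  · have e : {w : Fin (l + 1) → ℕ // ∑ i, w i = n ∧ ∀ i, 0 < w i} ≃
        {u : Fin (l + 1) → ℕ // ∑ i, u i = n - (l + 1)} := by
      refine ⟨fun w => ⟨fun i => w.1 i - 1, ?_⟩, fun u => ⟨fun i => u.1 i + 1, ?_, ?_⟩, ?_, ?_⟩
      · beta_reduce
        have key : ∑ i, (w.1 i - 1 + 1) = ∑ i, w.1 i :=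
          Finset.sum_congr rfl (fun i _ => by have := w.2.2 i; omega)
        rw [Finset.sum_add_distrib] at key
        simp only [Finset.sum_const, Finset.card_univ, Fintype.card_fin, smul_eq_mul,
          mul_one] at key
        have := w.2.1
        omega
      · beta_reduce
        have hu := u.2
        rw [Finset.sum_add_distrib, hu]
        simp only [Finset.sum_const, Finset.card_univ, Fintype.card_fin, smul_eq_mul, mul_one]
        omega
      · exact fun i => Nat.succ_pos _
      · intro w; ext i; have := w.2.2 i; simp; omega
      · intro u; ext i; simp
    rw [Nat.card_congr e, card_weak]
    have h1 : l + 1 + (n - (l + 1)) - 1 = n - 1 := by omega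
    have h2 : n - (l + 1) = (n - 1) - l := by omega
    rw [h1, h2, Nat.choose_symm (by omega)]
  · have : IsEmpty {w : Fin (l + 1) → ℕ // ∑ i, w i = n ∧ ∀ i, 0 < w i} := by
      refine ⟨fun w => ?_⟩
      have : (l + 1) ≤ ∑ i, w.1 i := by
        calc (l + 1) = ∑ _i : Fin (l + 1), 1 := by simp
          _ ≤ ∑ i, w.1 i := Finset.sum_le_sum (fun i _ => w.2.2 i)
      omega
    rw [Nat.card_of_isEmpty, Nat.choose_eq_zero_of_lt (by omega)]


lemma card_viol (l s k : ℕ) (h : s ≤ 2 * k + 1) (hks : k < s) :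
    Nat.card {w : Fin (l + 1) → ℕ // ∑ i, w i = s ∧ (∀ i, 0 < w i) ∧ ∃ i, k < w i}
      = (l + 1) * Nat.card {u : Fin (l + 1) → ℕ // ∑ i, u i = s - k ∧ ∀ i, 0 < u i} := by
  classical
  set T := {u : Fin (l + 1) → ℕ // ∑ i, u i = s - k ∧ ∀ i, 0 < u i} with hT
  have key : ∀ (i : Fin (l + 1)) (u : Fin (l + 1) → ℕ),
      ∑ j, (u j + if j = i then k else 0) = (∑ j, u j) + k := by
    intro i u
    rw [Finset.sum_add_distrib]
    congr 1
    simp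
  let f : Fin (l + 1) × T → {w : Fin (l + 1) → ℕ //
      ∑ i, w i = s ∧ (∀ i, 0 < w i) ∧ ∃ i, k < w i} := fun p =>
    ⟨fun j => p.2.1 j + if j = p.1 then k else 0, by
      rw [key p.1 p.2.1, p.2.2.1]; omega, by
      intro j; have := p.2.2.2 j; positivity, by
      refine ⟨p.1, ?_⟩; have := p.2.2.2 p.1; simp; omega⟩
  -- a pair of distinct coordinates bounds the sum below
  have pair_le : ∀ (u : Fin (l + 1) → ℕ) (i j : Fin (l + 1)), i ≠ j →
      u i + u j ≤ ∑ t, u t := by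
    intro u i j hij
    rw [← Finset.sum_pair hij]
    exact Finset.sum_le_sum_of_subset (Finset.subset_univ _)
  have hinj : Function.Injective f := by
    rintro ⟨i, u⟩ ⟨i', u'⟩ hfe
    have he : ∀ j, u.1 j + (if j = i then k else 0) = u'.1 j + (if j = i' then k else 0) :=
      fun j => congrFun (congrArg Subtype.val hfe) j
    have hii : i = i' := by
      by_contra hne
      have h1 := he i
      have h2 := he i'
      simp [hne, Ne.symm hne] at h1 h2
      -- u' i = u i + k, u i' = u' i' + k
      have hb := pair_le u.1 i i' hne
      rw [u.2.1] at hb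
      have p1 := u.2.2 i
      have p2 := u.2.2 i'
      have p3 := u'.2.2 i
      have p4 := u'.2.2 i'
      omega
    subst hii
    refine Prod.ext rfl (Subtype.ext (funext fun j => ?_))
    show u.1 j = u'.1 j
    have := he j
    by_cases hj : j = i
    · subst hj; simp at this; omega
    · simp [hj] at this; omega
  have hsurj : Function.Surjective f := by
    rintro ⟨w, hsum, hpos, i, hi⟩
    refine ⟨⟨i, ⟨fun j => w j - if j = i then k else 0, ?_, ?_⟩⟩, ?_⟩
    · have : ∀ j, (w j - if j = i then k else 0) + (if j = i then k else 0) = w j := by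
        intro j; by_cases hj : j = i <;> simp [hj] <;> omega
      have hs2 : ∑ j, ((w j - if j = i then k else 0) + (if j = i then k else 0))
          = ∑ j, w j := Finset.sum_congr rfl (fun j _ => this j)
      rw [key] at hs2
      beta_reduce
      omega
    · intro j; have := hpos j; by_cases hj : j = i <;> simp [hj] <;> omega
    · refine Subtype.ext (funext fun j => ?_)
      show (w j - if j = i then k else 0) + (if j = i then k else 0) = w j
      by_cases hj : j = i <;> simp [hj] <;> omega
  rw [Nat.card_congr (Equiv.ofBijective f ⟨hinj, hsurj⟩).symm, Nat.card_prod,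
    Nat.card_eq_fintype_card, Fintype.card_fin]

lemma card_split (l s k : ℕ) :
    Nat.card {w : Fin (l + 1) → ℕ // ∑ i, w i = s ∧ ∀ i, 0 < w i}
      = Nat.card {w : Fin (l + 1) → ℕ // ∑ i, w i = s ∧ (∀ i, 0 < w i) ∧ ∀ i, w i ≤ k}
        + Nat.card {w : Fin (l + 1) → ℕ // ∑ i, w i = s ∧ (∀ i, 0 < w i) ∧ ∃ i, k < w i} := by
  classical
  haveI h1 : Finite {w : Fin (l + 1) → ℕ // ∑ i, w i = s ∧ (∀ i, 0 < w i) ∧ ∀ i, w i ≤ k} :=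
    finite_of_bounded (fun w hw => le_of_mem_sum hw.1)
  haveI h2 : Finite {w : Fin (l + 1) → ℕ // ∑ i, w i = s ∧ (∀ i, 0 < w i) ∧ ∃ i, k < w i} :=
    finite_of_bounded (fun w hw => le_of_mem_sum hw.1)
  have e : {w : Fin (l + 1) → ℕ // ∑ i, w i = s ∧ ∀ i, 0 < w i} ≃
      {w : Fin (l + 1) → ℕ // ∑ i, w i = s ∧ (∀ i, 0 < w i) ∧ ∀ i, w i ≤ k}
      ⊕ {w : Fin (l + 1) → ℕ // ∑ i, w i = s ∧ (∀ i, 0 < w i) ∧ ∃ i, k < w i} := by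
    refine (Equiv.sumCompl
      (fun x : {w : Fin (l + 1) → ℕ // ∑ i, w i = s ∧ ∀ i, 0 < w i} =>
        ∀ i, x.1 i ≤ k)).symm.trans (Equiv.sumCongr ?_ ?_)
    · exact (Equiv.subtypeSubtypeEquivSubtypeInter
          (fun w : Fin (l + 1) → ℕ => ∑ i, w i = s ∧ ∀ i, 0 < w i)
          (fun w => ∀ i, w i ≤ k)).trans
        (Equiv.subtypeEquivRight (fun w => by tauto))
    · refine (Equiv.subtypeSubtypeEquivSubtypeInter
          (fun w : Fin (l + 1) → ℕ => ∑ i, w i = s ∧ ∀ i, 0 < w i)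
          (fun w => ¬ ∀ i, w i ≤ k)).trans
        (Equiv.subtypeEquivRight (fun w => ?_))
      push_neg
      tauto
  rw [Nat.card_congr e, Nat.card_sum]

lemma card_bounded (l s k : ℕ) (h : s ≤ 2 * k + 1) (hs : 1 ≤ s) :
    (Nat.card {w : Fin (l + 1) → ℕ //
        ∑ i, w i = s ∧ (∀ i, 0 < w i) ∧ ∀ i, w i ≤ k} : ℤ)
      = zchoose ((s : ℤ) - 1) l - (l + 1) * zchoose ((s : ℤ) - 1 - k) l := by
  have hz1 : zchoose ((s : ℤ) - 1) l = ((s - 1).choose l : ℤ) := by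
    have hcast : (s : ℤ) - 1 = ((s - 1 : ℕ) : ℤ) := by omega
    rw [hcast]; simp [zchoose]
  by_cases hks : k < s
  · have h1k : 1 ≤ s - k := by omega
    have hz2 : zchoose ((s : ℤ) - 1 - k) l = ((s - k - 1).choose l : ℤ) := by
      have hcast : (s : ℤ) - 1 - k = ((s - k - 1 : ℕ) : ℤ) := by omega
      rw [hcast]; simp [zchoose]
    have hsplit := card_split l s k
    rw [card_pos l s hs, card_viol l s k h hks, card_pos l (s - k) h1k] at hsplit
    have hzsplit : (((s - 1).choose l : ℕ) : ℤ)
        = (Nat.card {w : Fin (l + 1) → ℕ //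
            ∑ i, w i = s ∧ (∀ i, 0 < w i) ∧ ∀ i, w i ≤ k} : ℤ)
          + ((l : ℤ) + 1) * ((s - k - 1).choose l : ℤ) := by
      exact_mod_cast hsplit
    rw [hz1, hz2]
    linarith
  · have hz2 : zchoose ((s : ℤ) - 1 - k) l = 0 := by
      simp only [zchoose]
      rw [if_neg (by omega)]
    haveI : IsEmpty {w : Fin (l + 1) → ℕ //
        ∑ i, w i = s ∧ (∀ i, 0 < w i) ∧ ∃ i, k < w i} := by
      refine ⟨fun w => ?_⟩
      obtain ⟨hsum, _, i, hi⟩ := w.2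
      have := le_of_mem_sum hsum i
      omega
    have hsplit := card_split l s k
    rw [card_pos l s hs, Nat.card_of_isEmpty (α := {w : Fin (l + 1) → ℕ //
        ∑ i, w i = s ∧ (∀ i, 0 < w i) ∧ ∃ i, k < w i}), Nat.add_zero] at hsplit
    rw [hz1, hz2, ← hsplit]
    push_cast
    ring

lemma sum_support {n : ℕ} (v : Fin n → ℕ) :
    ∑ i ∈ Finset.univ.filter (fun i => 0 < v i), v i = ∑ i, v i :=
  Finset.sum_subset (Finset.subset_univ _) (fun x _ hx => by
    simp only [Finset.mem_filter, Finset.mem_univ, true_and, not_lt] at hx; omega)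

def expand {d l : ℕ} (T : Finset (Fin (d + 1))) (hT : T.card = l + 1)
    (w : Fin (l + 1) → ℕ) : Fin (d + 1) → ℕ :=
  fun i => if hi : i ∈ T then w ((T.orderIsoOfFin hT).symm ⟨i, hi⟩) else 0

lemma expand_mem {d l : ℕ} (T : Finset (Fin (d + 1))) (hT : T.card = l + 1)
    (w : Fin (l + 1) → ℕ) {i : Fin (d + 1)} (hi : i ∈ T) :
    expand T hT w i = w ((T.orderIsoOfFin hT).symm ⟨i, hi⟩) := dif_pos hi

lemma expand_not_mem {d l : ℕ} (T : Finset (Fin (d + 1))) (hT : T.card = l + 1)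
    (w : Fin (l + 1) → ℕ) {i : Fin (d + 1)} (hi : i ∉ T) :
    expand T hT w i = 0 := dif_neg hi

lemma expand_orderIso {d l : ℕ} (T : Finset (Fin (d + 1))) (hT : T.card = l + 1)
    (w : Fin (l + 1) → ℕ) (j : Fin (l + 1)) :
    expand T hT w ((T.orderIsoOfFin hT j : Fin (d + 1))) = w j := by
  rw [expand_mem T hT w (T.orderIsoOfFin hT j).2]
  congr 1
  have : (⟨((T.orderIsoOfFin hT j : Fin (d + 1))), (T.orderIsoOfFin hT j).2⟩
      : {x // x ∈ T}) = T.orderIsoOfFin hT j := rfl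
  rw [this]
  exact (T.orderIsoOfFin hT).symm_apply_apply j

lemma expand_sum {d l : ℕ} (T : Finset (Fin (d + 1))) (hT : T.card = l + 1)
    (w : Fin (l + 1) → ℕ) : ∑ i, expand T hT w i = ∑ j, w j := by
  rw [← Finset.sum_subset (Finset.subset_univ T)
    (fun i _ hi => expand_not_mem T hT w hi)]
  rw [← Finset.sum_coe_sort T (expand T hT w)]
  rw [← Fintype.sum_equiv (T.orderIsoOfFin hT).toEquiv w (fun x => expand T hT w ↑x)
    (fun j => (expand_orderIso T hT w j).symm)]

lemma expand_support {d l : ℕ} (T : Finset (Fin (d + 1))) (hT : T.card = l + 1)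
    (w : Fin (l + 1) → ℕ) (hw : ∀ j, 0 < w j) :
    Finset.univ.filter (fun i => 0 < expand T hT w i) = T := by
  ext i
  simp only [Finset.mem_filter, Finset.mem_univ, true_and]
  constructor
  · intro hpos
    by_contra hi
    rw [expand_not_mem T hT w hi] at hpos
    omega
  · intro hi
    rw [expand_mem T hT w hi]
    exact hw _

theorem main_thm (d s k l : ℕ) (h : s ≤ 2 * k + 1) :
    (Nat.card {v : Fin (d + 1) → ℕ //
        (∑ i, v i = s) ∧ (∀ i, v i ≤ k) ∧
          (Finset.univ.filter fun i => 0 < v i).card = l + 1} : ℤ) =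
      ((d + 1).choose (l + 1) : ℤ) *
        (zchoose ((s : ℤ) - 1) l - (l + 1) * zchoose ((s : ℤ) - 1 - k) l) := by
  classical
  rcases Nat.eq_zero_or_pos s with hs | hs
  · subst hs
    haveI : IsEmpty {v : Fin (d + 1) → ℕ //
        (∑ i, v i = 0) ∧ (∀ i, v i ≤ k) ∧
          (Finset.univ.filter fun i => 0 < v i).card = l + 1} := by
      refine ⟨fun v => ?_⟩
      obtain ⟨hsum, _, hcard⟩ := v.2
      have hne : (Finset.univ.filter fun i => 0 < v.1 i).Nonempty :=
        Finset.card_pos.mp (by rw [hcard]; omega)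
      obtain ⟨i, hi⟩ := hne
      rw [Finset.mem_filter] at hi
      have := le_of_mem_sum hsum i
      omega
    rw [Nat.card_of_isEmpty]
    have e1 : zchoose (((0:ℕ):ℤ) - 1) l = 0 := by
      simp only [zchoose]; rw [if_neg (by omega)]
    have e2 : zchoose (((0:ℕ):ℤ) - 1 - k) l = 0 := by
      simp only [zchoose]; rw [if_neg (by omega)]
    rw [e1, e2]
    ring
  · haveI hsb : Finite {w : Fin (l + 1) → ℕ //
        ∑ i, w i = s ∧ (∀ i, 0 < w i) ∧ ∀ i, w i ≤ k} :=
      finite_of_bounded (fun w hw => le_of_mem_sum hw.1)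
    let g : ({T : Finset (Fin (d + 1)) // T.card = l + 1} ×
        {w : Fin (l + 1) → ℕ // ∑ i, w i = s ∧ (∀ i, 0 < w i) ∧ ∀ i, w i ≤ k}) →
        {v : Fin (d + 1) → ℕ //
          (∑ i, v i = s) ∧ (∀ i, v i ≤ k) ∧
            (Finset.univ.filter fun i => 0 < v i).card = l + 1} := fun p =>
      ⟨expand p.1.1 p.1.2 p.2.1, by
          rw [expand_sum]; exact p.2.2.1, by
          intro i
          by_cases hi : i ∈ p.1.1
          · rw [expand_mem _ _ _ hi]; exact p.2.2.2.2 _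
          · rw [expand_not_mem _ _ _ hi]; exact Nat.zero_le _, by
          rw [expand_support _ _ _ p.2.2.2.1]; exact p.1.2⟩
    have hinj : Function.Injective g := by
      rintro ⟨⟨T, hT⟩, ⟨w, hw⟩⟩ ⟨⟨T', hT'⟩, ⟨w', hw'⟩⟩ hge
      have hv : expand T hT w = expand T' hT' w' := congrArg Subtype.val hge
      have hTT : T = T' := by
        rw [← expand_support T hT w hw.2.1, ← expand_support T' hT' w' hw'.2.1, hv]
      subst hTT
      refine Prod.ext (Subtype.ext rfl) (Subtype.ext (funext fun j => ?_))
      show w j = w' j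
      have h1 := expand_orderIso T hT w j
      have h2 := expand_orderIso T hT' w' j
      rw [← h1, ← h2, hv]
    have hsurj : Function.Surjective g := by
      rintro ⟨v, hsum, hbound, hcard⟩
      set T := Finset.univ.filter (fun i => 0 < v i) with hTdef
      refine ⟨⟨⟨T, hcard⟩, ⟨fun j => v ((T.orderIsoOfFin hcard j : Fin (d + 1))), ?_, ?_, ?_⟩⟩, ?_⟩
      · beta_reduce
        have hse := Fintype.sum_equiv (T.orderIsoOfFin hcard).toEquiv
          (fun j => v ((T.orderIsoOfFin hcard j : Fin (d + 1)))) (fun x : T => v ↑x)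
          (fun j => rfl)
        rw [hse, Finset.sum_coe_sort T v]
        have : ∑ i ∈ T, v i = ∑ i, v i := by rw [hTdef]; exact sum_support v
        rw [this, hsum]
      · intro j
        exact (Finset.mem_filter.mp (T.orderIsoOfFin hcard j).2).2
      · intro j; exact hbound _
      · refine Subtype.ext (funext fun i => ?_)
        show expand T hcard _ i = v i
        by_cases hi : i ∈ T
        · rw [expand_mem _ _ _ hi]
          have heq : ((T.orderIsoOfFin hcard ((T.orderIsoOfFin hcard).symm ⟨i, hi⟩)
              : Fin (d + 1))) = i := by
            rw [(T.orderIsoOfFin hcard).apply_symm_apply ⟨i, hi⟩]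
          exact congrArg v heq
        · rw [expand_not_mem _ _ _ hi]
          rw [hTdef, Finset.mem_filter] at hi
          simp only [Finset.mem_univ, true_and, not_lt] at hi
          omega
    rw [Nat.card_congr (Equiv.ofBijective g ⟨hinj, hsurj⟩).symm, Nat.card_prod,
      Nat.card_eq_fintype_card, Fintype.card_finset_len, Fintype.card_fin]
    push_cast [card_bounded l s k h hs]
    ring

/-- Let `2k + 1 ≥ s` and `l ∈ ℕ₀`. The number of `v ∈ △_{d,s}^ℤ` whose support has
size `l + 1` (i.e. `level_d v = l`) and with `max_i v_i ≤ k` equals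
`C(d+1, l+1) · ( C(s−1, l) − (l+1)·C(s−1−k, l) )`, binomials `0` outside range. -/
theorem simplex_points_in_radius_on_level (d s k l : ℕ) (h : s ≤ 2 * k + 1) :
    (Nat.card {v : Fin (d + 1) → ℕ //
        (∑ i, v i = s) ∧ (∀ i, v i ≤ k) ∧
          (Finset.univ.filter fun i => 0 < v i).card = l + 1} : ℤ) =
      ((d + 1).choose (l + 1) : ℤ) *
        (zchoose ((s : ℤ) - 1) l - (l + 1) * zchoose ((s : ℤ) - 1 - k) l) :=
  main_thm d s k l h
end

section
/- Let P be an undirected path with vertices v_1, ..., v_{p+1} and edges {v_i, v_{i+1}} for i ∈ [p]. Let γ ≥ 0 and define b(v_i) = −(p−1)·γ for i ∈ {1, p+1} and b(v_i) = 2γ otherwise. Then there exists a flow f : E↔(P) → ℝ≥0 on the bidirected edges of P satisfying f(δ⁺(v)) − f(δ⁻(v)) = b(v) for all vertices v, and f(v,w) + f(w,v) ≤ (p−1)·γ for every edge {v,w}. -/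
/-- On the undirected path with vertices `v_1, …, v_{p+1}` and edges
`{v_i, v_{i+1}}` for `i ∈ [p]`, with balances `b(v_1) = b(v_{p+1}) = −(p−1)·γ`
and `b(v_i) = 2γ` for interior vertices, there exists a bidirected balance-flow
`f` (a nonnegative function on directed edges with net outflow `b(v)` at every
vertex `v`) such that `f(v,w) + f(w,v) ≤ (p−1)·γ` on every edge. -/
theorem flow_level_one (p : ℕ) (hp : 1 ≤ p) (γ : ℝ) (hγ : 0 ≤ γ) :
    ∃ f : ℕ → ℕ → ℝ,
      (∀ i j, 0 ≤ f i j) ∧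
      (f 1 2 - f 2 1 = -((p : ℝ) - 1) * γ) ∧
      (f (p + 1) p - f p (p + 1) = -((p : ℝ) - 1) * γ) ∧
      (∀ i, 2 ≤ i → i ≤ p →
        f i (i + 1) + f i (i - 1) - f (i + 1) i - f (i - 1) i = 2 * γ) ∧
      (∀ i, 1 ≤ i → i ≤ p → f i (i + 1) + f (i + 1) i ≤ ((p : ℝ) - 1) * γ) := by
  set g : ℕ → ℝ := fun i => (2 * (i : ℝ) - p - 1) * γ with hg
  refine ⟨fun i j =>
    if j = i + 1 ∧ 1 ≤ i ∧ i ≤ p then max (g i) 0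
    else if i = j + 1 ∧ 1 ≤ j ∧ j ≤ p then max (-(g j)) 0 else 0, ?_, ?_, ?_, ?_, ?_⟩
  · intro i j
    dsimp only
    split_ifs <;> simp [le_max_right]
  · have h1 : (fun i j =>
        if j = i + 1 ∧ 1 ≤ i ∧ i ≤ p then max (g i) 0
        else if i = j + 1 ∧ 1 ≤ j ∧ j ≤ p then max (-(g j)) 0 else 0) 1 2
        = max (g 1) 0 := by simp [hp]
    have h2 : (fun i j =>
        if j = i + 1 ∧ 1 ≤ i ∧ i ≤ p then max (g i) 0
        else if i = j + 1 ∧ 1 ≤ j ∧ j ≤ p then max (-(g j)) 0 else 0) 2 1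
        = max (-(g 1)) 0 := by norm_num [hp]
    rw [h1, h2, max_zero_sub_max_neg_zero_eq_self, hg]
    ring
  · have hne : ¬ (p = p + 1 + 1) := by omega
    have h1 : (fun i j =>
        if j = i + 1 ∧ 1 ≤ i ∧ i ≤ p then max (g i) 0
        else if i = j + 1 ∧ 1 ≤ j ∧ j ≤ p then max (-(g j)) 0 else 0) (p + 1) p
        = max (-(g p)) 0 := by simp [hne, hp]
    have h2 : (fun i j =>
        if j = i + 1 ∧ 1 ≤ i ∧ i ≤ p then max (g i) 0
        else if i = j + 1 ∧ 1 ≤ j ∧ j ≤ p then max (-(g j)) 0 else 0) p (p + 1)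
        = max (g p) 0 := by simp [hp]
    rw [h1, h2]
    have := max_zero_sub_max_neg_zero_eq_self (g p)
    have : max (-(g p)) 0 - max (g p) 0 = -(g p) := by linarith
    rw [this, hg]; ring
  · intro i h2i hip
    have e1 : i - 1 + 1 = i := by omega
    have hne1 : ¬ (i - 1 = i + 1) := by omega
    have hne2 : ¬ (i = (i + 1) + 1) := by omega
    have h1 : (fun i j =>
        if j = i + 1 ∧ 1 ≤ i ∧ i ≤ p then max (g i) 0
        else if i = j + 1 ∧ 1 ≤ j ∧ j ≤ p then max (-(g j)) 0 else 0) i (i + 1)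
        = max (g i) 0 := by simp; omega
    have h2 : (fun i j =>
        if j = i + 1 ∧ 1 ≤ i ∧ i ≤ p then max (g i) 0
        else if i = j + 1 ∧ 1 ≤ j ∧ j ≤ p then max (-(g j)) 0 else 0) i (i - 1)
        = max (-(g (i - 1))) 0 := by
      have hc : 1 ≤ i - 1 ∧ i - 1 ≤ p := ⟨by omega, by omega⟩
      simp [hne1, e1, hc]
    have h3 : (fun i j =>
        if j = i + 1 ∧ 1 ≤ i ∧ i ≤ p then max (g i) 0
        else if i = j + 1 ∧ 1 ≤ j ∧ j ≤ p then max (-(g j)) 0 else 0) (i + 1) i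
        = max (-(g i)) 0 := by
      have hc : 1 ≤ i ∧ i ≤ p := ⟨by omega, hip⟩
      simp [hne2, hc]
    have h4 : (fun i j =>
        if j = i + 1 ∧ 1 ≤ i ∧ i ≤ p then max (g i) 0
        else if i = j + 1 ∧ 1 ≤ j ∧ j ≤ p then max (-(g j)) 0 else 0) (i - 1) i
        = max (g (i - 1)) 0 := by
      have hc : 1 ≤ i - 1 ∧ i - 1 ≤ p := ⟨by omega, by omega⟩
      simp [e1, hc]
    rw [h1, h2, h3, h4]
    have A := max_zero_sub_max_neg_zero_eq_self (g i)
    have B := max_zero_sub_max_neg_zero_eq_self (g (i - 1))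
    have hc : ((i - 1 : ℕ) : ℝ) = (i : ℝ) - 1 := by
      have : (1 : ℕ) ≤ i := by omega
      push_cast [this]; ring
    have : g i - g (i - 1) = 2 * γ := by rw [hg]; simp only [hc]; ring
    linarith
  · intro i h1i hip
    have h1 : (fun i j =>
        if j = i + 1 ∧ 1 ≤ i ∧ i ≤ p then max (g i) 0
        else if i = j + 1 ∧ 1 ≤ j ∧ j ≤ p then max (-(g j)) 0 else 0) i (i + 1)
        = max (g i) 0 := by simp; omega
    have hne2 : ¬ (i = (i + 1) + 1) := by omega
    have h3 : (fun i j =>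
        if j = i + 1 ∧ 1 ≤ i ∧ i ≤ p then max (g i) 0
        else if i = j + 1 ∧ 1 ≤ j ∧ j ≤ p then max (-(g j)) 0 else 0) (i + 1) i
        = max (-(g i)) 0 := by
      have hc : 1 ≤ i ∧ i ≤ p := ⟨h1i, hip⟩
      simp [hne2, hc]
    rw [h1, h3, max_zero_add_max_neg_zero_eq_abs_self, hg, abs_mul, abs_of_nonneg hγ]
    have hb : |2 * (i : ℝ) - p - 1| ≤ (p : ℝ) - 1 := by
      rw [abs_le]
      constructor <;> [skip; skip] <;>
        · have h1 : (1 : ℝ) ≤ (i : ℝ) := by exact_mod_cast h1i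
          have h2 : (i : ℝ) ≤ (p : ℝ) := by exact_mod_cast hip
          linarith
    exact mul_le_mul_of_nonneg_right hb hγ
end

section
/- Let s, δ ∈ ℕ with s = 3δ − 2. Let V := { v ∈ △_{2,s}^ℤ : max_i v_i ≤ s−δ } ∪ { v ∈ △_{2,s+1}^ℤ : 1 ≤ v_i ≤ s−δ+1 for all i }, with edges between vertices at L¹-distance 1. Then every vertex of V lies in exactly one of the six sets A_i := { v ∈ V : v_i ≤ (s+2)/3 − 1 and min_{j≠i} v_j ≥ (s+2)/3 } and B_i := { v ∈ V : v_i ≥ (s+2)/3 and max_{j≠i} v_j ≤ (s+2)/3 − 1 } for i ∈ [3]. -/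
/-- The vertex set of the simplified level-2 gadget. -/
def gadgetV (s δ : ℕ) : Set (Fin 3 → ℕ) :=
  {v | (∑ i, v i = s ∧ ∀ i, v i ≤ s - δ) ∨
       (∑ i, v i = s + 1 ∧ ∀ i, 1 ≤ v i ∧ v i ≤ s - δ + 1)}

/-- `A_i := { v ∈ V : v_i ≤ δ−1 ∧ min_{j≠i} v_j ≥ δ }` (note `δ = (s+2)/3`). -/
def gadgetA (s δ : ℕ) (i : Fin 3) (v : Fin 3 → ℕ) : Prop :=
  v ∈ gadgetV s δ ∧ v i ≤ δ - 1 ∧ ∀ j, j ≠ i → δ ≤ v j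

/-- `B_i := { v ∈ V : v_i ≥ δ ∧ max_{j≠i} v_j ≤ δ−1 }`. -/
def gadgetB (s δ : ℕ) (i : Fin 3) (v : Fin 3 → ℕ) : Prop :=
  v ∈ gadgetV s δ ∧ δ ≤ v i ∧ ∀ j, j ≠ i → v j ≤ δ - 1

/-- If `s = 3δ − 2`, every vertex of the simplified level-2 gadget lies in exactly one
of the six sets `A_1, A_2, A_3, B_1, B_2, B_3`. -/
theorem gadget_partition (s δ : ℕ) (hs : s + 2 = 3 * δ) :
    ∀ v ∈ gadgetV s δ, ∃! c : Fin 3 × Bool,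
      (if c.2 then gadgetA s δ c.1 v else gadgetB s δ c.1 v) := by
  intro v hv
  have hδ : 1 ≤ δ := by omega
  have hsum : v 0 + v 1 + v 2 = s ∨ v 0 + v 1 + v 2 = s + 1 := by
    rcases hv with ⟨h, _⟩ | ⟨h, _⟩
    · left; rw [← h, Fin.sum_univ_three]
    · right; rw [← h, Fin.sum_univ_three]
  rcases lt_or_ge (v 0) δ with h0 | h0 <;>
    rcases lt_or_ge (v 1) δ with h1 | h1 <;>
      rcases lt_or_ge (v 2) δ with h2 | h2
  · exfalso; omega
  · -- low low high : B_2
    refine ⟨(2, false), ⟨hv, h2, ?_⟩, ?_⟩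
    · intro j hj; fin_cases j <;> simp_all <;> omega
    · rintro ⟨j, bb⟩ h
      fin_cases j <;> cases bb <;>
        first
          | rfl
          | exact absurd h.2.1 (by omega)
          | exact absurd (h.2.2 0 (by decide)) (by omega)
          | exact absurd (h.2.2 1 (by decide)) (by omega)
          | exact absurd (h.2.2 2 (by decide)) (by omega)
  · -- low high low : B_1
    refine ⟨(1, false), ⟨hv, h1, ?_⟩, ?_⟩
    · intro j hj; fin_cases j <;> simp_all <;> omega
    · rintro ⟨j, bb⟩ h
      fin_cases j <;> cases bb <;>
        first
          | rfl
          | exact absurd h.2.1 (by omega)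
          | exact absurd (h.2.2 0 (by decide)) (by omega)
          | exact absurd (h.2.2 1 (by decide)) (by omega)
          | exact absurd (h.2.2 2 (by decide)) (by omega)
  · -- low high high : A_0
    refine ⟨(0, true), ⟨hv, show v 0 ≤ δ - 1 by omega, ?_⟩, ?_⟩
    · intro j hj; fin_cases j <;> simp_all <;> omega
    · rintro ⟨j, bb⟩ h
      fin_cases j <;> cases bb <;>
        first
          | rfl
          | exact absurd h.2.1 (by omega)
          | exact absurd (h.2.2 0 (by decide)) (by omega)
          | exact absurd (h.2.2 1 (by decide)) (by omega)
          | exact absurd (h.2.2 2 (by decide)) (by omega)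
  · -- high low low : B_0
    refine ⟨(0, false), ⟨hv, h0, ?_⟩, ?_⟩
    · intro j hj; fin_cases j <;> simp_all <;> omega
    · rintro ⟨j, bb⟩ h
      fin_cases j <;> cases bb <;>
        first
          | rfl
          | exact absurd h.2.1 (by omega)
          | exact absurd (h.2.2 0 (by decide)) (by omega)
          | exact absurd (h.2.2 1 (by decide)) (by omega)
          | exact absurd (h.2.2 2 (by decide)) (by omega)
  · -- high low high : A_1
    refine ⟨(1, true), ⟨hv, show v 1 ≤ δ - 1 by omega, ?_⟩, ?_⟩
    · intro j hj; fin_cases j <;> simp_all <;> omega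
    · rintro ⟨j, bb⟩ h
      fin_cases j <;> cases bb <;>
        first
          | rfl
          | exact absurd h.2.1 (by omega)
          | exact absurd (h.2.2 0 (by decide)) (by omega)
          | exact absurd (h.2.2 1 (by decide)) (by omega)
          | exact absurd (h.2.2 2 (by decide)) (by omega)
  · -- high high low : A_2
    refine ⟨(2, true), ⟨hv, show v 2 ≤ δ - 1 by omega, ?_⟩, ?_⟩
    · intro j hj; fin_cases j <;> simp_all <;> omega
    · rintro ⟨j, bb⟩ h
      fin_cases j <;> cases bb <;>
        first
          | rfl
          | exact absurd h.2.1 (by omega)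
          | exact absurd (h.2.2 0 (by decide)) (by omega)
          | exact absurd (h.2.2 1 (by decide)) (by omega)
          | exact absurd (h.2.2 2 (by decide)) (by omega)
  · exfalso; omega
end

section
/- Let s, δ ∈ ℕ with s = 3δ − 2 and the graph G = (V, E) as follows: V := { v ∈ △_{2,s}^ℤ : max_i v_i ≤ s−δ } ∪ { v ∈ △_{2,s+1}^ℤ : 1 ≤ v_i ≤ s−δ+1 for all i }, E := { {v,w} : v,w ∈ V, ‖v−w‖₁ = 1 }. Then G has a perfect matching between △_{2,s}^ℤ ∩ V and △_{2,s+1}^ℤ ∩ V. -/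
set_option maxHeartbeats 1600000

/-- Matching map: add `1` at the argmin if `min+max+2 ≤ 2δ`, else at the argmax. -/
def goUp (δ : ℕ) (v : Fin 3 → ℕ) : Fin 3 → ℕ :=
  if min (v 0) (min (v 1) (v 2)) + max (v 0) (max (v 1) (v 2)) + 2 ≤ 2 * δ then
    if v 0 ≤ v 1 ∧ v 0 ≤ v 2 then ![v 0 + 1, v 1, v 2]
    else if v 1 ≤ v 2 then ![v 0, v 1 + 1, v 2]
    else ![v 0, v 1, v 2 + 1]
  else
    if v 1 ≤ v 0 ∧ v 2 ≤ v 0 then ![v 0 + 1, v 1, v 2]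
    else if v 2 ≤ v 1 then ![v 0, v 1 + 1, v 2]
    else ![v 0, v 1, v 2 + 1]

/-- Inverse map: subtract `1` at the argmax if `2δ ≤ min+max`, else at the argmin. -/
def goDown (δ : ℕ) (w : Fin 3 → ℕ) : Fin 3 → ℕ :=
  if 2 * δ ≤ min (w 0) (min (w 1) (w 2)) + max (w 0) (max (w 1) (w 2)) then
    if w 1 ≤ w 0 ∧ w 2 ≤ w 0 then ![w 0 - 1, w 1, w 2]
    else if w 2 ≤ w 1 then ![w 0, w 1 - 1, w 2]
    else ![w 0, w 1, w 2 - 1]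
  else
    if w 0 ≤ w 1 ∧ w 0 ≤ w 2 then ![w 0 - 1, w 1, w 2]
    else if w 1 ≤ w 2 then ![w 0, w 1 - 1, w 2]
    else ![w 0, w 1, w 2 - 1]

lemma vec3_apply0 (x y z : ℕ) : ![x, y, z] 0 = x := rfl
lemma vec3_apply1 (x y z : ℕ) : ![x, y, z] 1 = y := rfl
lemma vec3_apply2 (x y z : ℕ) : ![x, y, z] 2 = z := rfl

lemma forall3 {P : Fin 3 → Prop} (h0 : P 0) (h1 : P 1) (h2 : P 2) (i : Fin 3) : P i :=
  match i with | 0 => h0 | 1 => h1 | 2 => h2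

lemma eq_fun3 {v : Fin 3 → ℕ} {x y z : ℕ} (h0 : x = v 0) (h1 : y = v 1) (h2 : z = v 2) :
    ![x, y, z] = v := by
  funext i
  exact forall3 (P := fun i => ![x, y, z] i = v i) h0 h1 h2 i

/-- If `s = 3δ − 2`, the gadget graph (unit `L¹`-distance edges on `V`) has a
perfect matching between `△_{2,s}^ℤ ∩ V` and `△_{2,s+1}^ℤ ∩ V`, i.e. a bijection
`μ` between the two classes such that `v` and `μ v` are joined by an edge. -/
theorem gadget_perfect_matching (s δ : ℕ) (hs : s + 2 = 3 * δ) :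
    ∃ μ : (Fin 3 → ℕ) → (Fin 3 → ℕ),
      Set.BijOn μ {v ∈ gadgetV s δ | ∑ i, v i = s}
        {v ∈ gadgetV s δ | ∑ i, v i = s + 1} ∧
      ∀ v ∈ {v ∈ gadgetV s δ | ∑ i, v i = s},
        ∑ i, ((v i : ℤ) - μ v i).natAbs = 1 := by
  have hlow : ∀ v ∈ {v ∈ gadgetV s δ | ∑ i, v i = s},
      v 0 + v 1 + v 2 = s ∧ v 0 ≤ s - δ ∧ v 1 ≤ s - δ ∧ v 2 ≤ s - δ := by
    rintro v ⟨hmem, hsum⟩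
    rw [Fin.sum_univ_three] at hsum
    rcases hmem with ⟨_, hb⟩ | ⟨hS, _⟩
    · exact ⟨hsum, hb 0, hb 1, hb 2⟩
    · rw [Fin.sum_univ_three] at hS; omega
  have hupp : ∀ w ∈ {v ∈ gadgetV s δ | ∑ i, v i = s + 1},
      w 0 + w 1 + w 2 = s + 1 ∧ (1 ≤ w 0 ∧ w 0 ≤ s - δ + 1) ∧
        (1 ≤ w 1 ∧ w 1 ≤ s - δ + 1) ∧ (1 ≤ w 2 ∧ w 2 ≤ s - δ + 1) := by
    rintro w ⟨hmem, hsum⟩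
    rw [Fin.sum_univ_three] at hsum
    rcases hmem with ⟨hS, _⟩ | ⟨_, hb⟩
    · rw [Fin.sum_univ_three] at hS; omega
    · exact ⟨hsum, hb 0, hb 1, hb 2⟩
  have hmapsUp : Set.MapsTo (goUp δ) {v ∈ gadgetV s δ | ∑ i, v i = s}
      {v ∈ gadgetV s δ | ∑ i, v i = s + 1} := by
    intro v hv
    obtain ⟨hsum, h0, h1, h2⟩ := hlow v hv
    refine ⟨Or.inr ⟨?_, forall3 ?_ ?_ ?_⟩, ?_⟩ <;>
      simp only [Fin.sum_univ_three, goUp] <;>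
      split_ifs <;>
      simp only [vec3_apply0, vec3_apply1, vec3_apply2] <;> omega
  have hmapsDown : Set.MapsTo (goDown δ) {v ∈ gadgetV s δ | ∑ i, v i = s + 1}
      {v ∈ gadgetV s δ | ∑ i, v i = s} := by
    intro w hw
    obtain ⟨hsum, h0, h1, h2⟩ := hupp w hw
    refine ⟨Or.inl ⟨?_, forall3 ?_ ?_ ?_⟩, ?_⟩ <;>
      simp only [Fin.sum_univ_three, goDown] <;>
      split_ifs <;>
      simp only [vec3_apply0, vec3_apply1, vec3_apply2] <;> omega
  have hleft : Set.LeftInvOn (goDown δ) (goUp δ) {v ∈ gadgetV s δ | ∑ i, v i = s} := by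
    intro v hv
    obtain ⟨hsum, h0, h1, h2⟩ := hlow v hv
    simp only [goUp]
    split_ifs <;>
      · simp only [goDown, vec3_apply0, vec3_apply1, vec3_apply2]
        repeat' (split_ifs <;> simp only [*, ↓reduceIte])
        all_goals exact eq_fun3 (by omega) (by omega) (by omega)
  have hright : Set.RightInvOn (goDown δ) (goUp δ) {v ∈ gadgetV s δ | ∑ i, v i = s + 1} := by
    intro w hw
    obtain ⟨hsum, h0, h1, h2⟩ := hupp w hw
    simp only [goDown]
    split_ifs <;>
      · simp only [goUp, vec3_apply0, vec3_apply1, vec3_apply2]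
        repeat' (split_ifs <;> simp only [*, ↓reduceIte])
        all_goals exact eq_fun3 (by omega) (by omega) (by omega)
  refine ⟨goUp δ, Set.InvOn.bijOn ⟨hleft, hright⟩ hmapsUp hmapsDown, ?_⟩
  intro v hv
  obtain ⟨hsum, h0, h1, h2⟩ := hlow v hv
  rw [Fin.sum_univ_three]
  simp only [goUp]
  split_ifs <;> simp only [vec3_apply0, vec3_apply1, vec3_apply2] <;> omega
end

section
/- In the graph SG_{d,s,δ}, every required vertex r_i has degree |△_{d−1,δ}^ℤ| = binomial(d−1+δ, d−1), every vertex v ∈ △_{d,s}^ℤ ∩ V_{d,s,δ} has degree d + 1, and every vertex v ∈ △_{d,s+1}^ℤ ∩ V_{d,s,δ} has degree level_d(v) + 1 = |support_d(v)|. -/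
/-- Membership in the Steiner-vertex set `V_{d,s,δ}` of the simplified simplex graph:
points of `△_{d,s}^ℤ ∪ △_{d,s+1}^ℤ` with all coordinates at most `s − δ`. -/
def inSimplifiedV (d s δ : ℕ) (v : Fin (d + 1) → ℕ) : Prop :=
  (∑ i, v i = s ∨ ∑ i, v i = s + 1) ∧ ∀ i, v i ≤ s - δ

/-- Unit `L¹` distance between two points of `ℕ^{d+1}`. -/
def unitDist (d : ℕ) (v w : Fin (d + 1) → ℕ) : Prop :=
  ∑ i, ((v i : ℤ) - w i).natAbs = 1

private lemma sum_nat_eq_one {n : ℕ} {f : Fin n → ℕ} (h : ∑ i, f i = 1) :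
    ∃ i, f i = 1 ∧ ∀ j, j ≠ i → f j = 0 := by
  have h0 : ∑ i, f i ≠ 0 := by rw [h]; exact one_ne_zero
  obtain ⟨i, -, hi⟩ := Finset.exists_ne_zero_of_sum_ne_zero h0
  have h2 := Finset.sum_erase_add Finset.univ f (Finset.mem_univ i)
  have h3 : ∑ j ∈ Finset.univ.erase i, f j = 0 := by omega
  refine ⟨i, by omega, fun j hj => ?_⟩
  exact (Finset.sum_eq_zero_iff.mp h3) j (Finset.mem_erase.mpr ⟨hj, Finset.mem_univ j⟩)

private lemma unitDist_iff {d : ℕ} {v w : Fin (d + 1) → ℕ} :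
    unitDist d v w ↔ ∃ i, (∀ j, j ≠ i → w j = v j) ∧ (w i = v i + 1 ∨ v i = w i + 1) := by
  constructor
  · intro h
    obtain ⟨i, hi, hj⟩ := sum_nat_eq_one h
    exact ⟨i, fun j hji => by have := hj j hji; omega, by omega⟩
  · rintro ⟨i, hj, hi⟩
    unfold unitDist
    rw [Fin.sum_univ_succAbove (fun j => ((v j : ℤ) - w j).natAbs) i]
    have : ∑ k : Fin d, ((v (i.succAbove k) : ℤ) - w (i.succAbove k)).natAbs = 0 := by
      apply Finset.sum_eq_zero
      intro k _
      have := hj (i.succAbove k) (Fin.succAbove_ne i k)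
      omega
    omega

private lemma sum_off_eq {d : ℕ} {v w : Fin (d + 1) → ℕ} {i : Fin (d + 1)}
    (hj : ∀ j, j ≠ i → w j = v j) : ∑ j, w j + v i = ∑ j, v j + w i := by
  rw [Fin.sum_univ_succAbove w i, Fin.sum_univ_succAbove v i]
  have : ∀ k : Fin d, w (i.succAbove k) = v (i.succAbove k) :=
    fun k => hj _ (Fin.succAbove_ne i k)
  rw [Finset.sum_congr rfl fun k _ => this k]
  ring

private lemma card_tuples (d δ : ℕ) :
    Nat.card {u : Fin d → ℕ // ∑ k, u k = δ} = (d + δ - 1).choose δ := by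
  have e : {u : Fin d → ℕ // ∑ k, u k = δ} ≃
      ((Finset.univ : Finset (Fin d)).piAntidiag δ : Finset (Fin d → ℕ)) :=
    Equiv.subtypeEquivRight fun u => by simp
  rw [Nat.card_congr e, Nat.card_eq_finsetCard, ← Finset.map_sym_eq_piAntidiag,
    Finset.card_map, Finset.sym_univ, Finset.card_univ, Sym.card_sym_eq_choose,
    Fintype.card_fin]

/-- Vertex degrees in `SG_{d,s,δ}`: every required vertex `r_i` has degree
`|△_{d−1,δ}^ℤ| = C(d−1+δ, d−1)`; every `v ∈ △_{d,s}^ℤ ∩ V_{d,s,δ}` has degree `d + 1`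
(graph neighbours in `V_{d,s,δ}` plus edges of `F_{d,s,δ}` to required vertices `r_i`
with `v_i = s − δ`); every `v ∈ △_{d,s+1}^ℤ ∩ V_{d,s,δ}` has degree
`level_d(v) + 1 = |support_d(v)|`. -/
theorem simplified_simplex_degrees (d s δ : ℕ) (hd : 1 ≤ d) (hδ : 2 * δ ≤ s) :
    (∀ i : Fin (d + 1),
      Nat.card {v : Fin (d + 1) → ℕ //
          (∑ j, v j = s) ∧ (∀ j, v j ≤ s - δ) ∧ v i = s - δ} =
        (d - 1 + δ).choose (d - 1)) ∧
    (∀ v : Fin (d + 1) → ℕ, (∑ i, v i = s) → (∀ i, v i ≤ s - δ) →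
      Nat.card {w : Fin (d + 1) → ℕ // inSimplifiedV d s δ w ∧ unitDist d v w} +
        Nat.card {i : Fin (d + 1) // v i = s - δ} = d + 1) ∧
    (∀ v : Fin (d + 1) → ℕ, (∑ i, v i = s + 1) → (∀ i, v i ≤ s - δ) →
      Nat.card {w : Fin (d + 1) → ℕ // inSimplifiedV d s δ w ∧ unitDist d v w} =
        (Finset.univ.filter fun i => 0 < v i).card) := by
  refine ⟨?_, ?_, ?_⟩
  · -- Part 1: degree of required vertices
    intro i
    have hb : Function.Bijective
        (fun v : {v : Fin (d + 1) → ℕ //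
            (∑ j, v j = s) ∧ (∀ j, v j ≤ s - δ) ∧ v i = s - δ} =>
          (⟨fun k => v.1 (i.succAbove k), by
            show ∑ k : Fin d, v.1 (i.succAbove k) = δ
            have h1 := Fin.sum_univ_succAbove v.1 i
            have h2 := v.2.1
            have h3 := v.2.2.2
            omega⟩ : {u : Fin d → ℕ // ∑ k, u k = δ})) := by
      constructor
      · intro a b h
        have h' : ∀ k, a.1 (i.succAbove k) = b.1 (i.succAbove k) :=
          fun k => congrFun (congrArg Subtype.val h) k
        apply Subtype.ext
        funext j
        rcases eq_or_ne j i with hji | hji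
        · rw [hji, a.2.2.2, b.2.2.2]
        · obtain ⟨k, hk⟩ := Fin.exists_succAbove_eq hji
          rw [← hk]
          exact h' k
      · rintro ⟨u, hu⟩
        refine ⟨⟨i.insertNth (s - δ) u, ?_, ?_, by simp⟩, ?_⟩
        · rw [Fin.sum_univ_succAbove _ i, Fin.insertNth_apply_same]
          simp only [Fin.insertNth_apply_succAbove]
          omega
        · intro j
          rcases eq_or_ne j i with hji | hji
          · rw [hji, Fin.insertNth_apply_same]
          · obtain ⟨k, hk⟩ := Fin.exists_succAbove_eq hji
            rw [← hk, Fin.insertNth_apply_succAbove]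
            have : u k ≤ ∑ k, u k :=
              Finset.single_le_sum (fun _ _ => Nat.zero_le _) (Finset.mem_univ k)
            omega
        · apply Subtype.ext
          funext k
          simp [Fin.insertNth_apply_succAbove]
    rw [Nat.card_eq_of_bijective _ hb, card_tuples]
    have h1 : d + δ - 1 = d - 1 + δ := by omega
    rw [h1, ← Nat.choose_symm (by omega : δ ≤ d - 1 + δ)]
    congr 1
    omega
  · -- Part 2: degree of lower-level simplex vertices
    intro v hvs hvb
    have hset : {w | inSimplifiedV d s δ w ∧ unitDist d v w} =
        (fun i => Function.update v i (v i + 1)) '' {i | ¬ v i = s - δ} := by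
      ext w
      constructor
      · rintro ⟨⟨hwsum, hwb⟩, hwd⟩
        obtain ⟨i, hoff, hcase⟩ := unitDist_iff.mp hwd
        have hsum := sum_off_eq hoff
        rcases hcase with hc | hc
        · refine ⟨i, ?_, ?_⟩
          · have := hwb i
            simp only [Set.mem_setOf_eq]
            omega
          · show Function.update v i (v i + 1) = w
            funext j
            rcases eq_or_ne j i with hji | hji
            · rw [hji, Function.update_self]
              omega
            · rw [Function.update_of_ne hji]
              exact (hoff j hji).symm
        · exfalso
          omega
      · rintro ⟨i, hi, rfl⟩
        dsimp only
        simp only [Set.mem_setOf_eq] at hi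
        have hoff : ∀ j, j ≠ i → Function.update v i (v i + 1) j = v j :=
          fun j hj => Function.update_of_ne hj _ _
        have hsum := sum_off_eq hoff
        rw [Function.update_self] at hsum
        refine ⟨⟨Or.inr (by omega), fun j => ?_⟩, ?_⟩
        · rcases eq_or_ne j i with hji | hji
          · rw [hji, Function.update_self]
            have := hvb i
            omega
          · rw [Function.update_of_ne hji]
            exact hvb j
        · exact unitDist_iff.mpr ⟨i, hoff, Or.inl (Function.update_self i _ v)⟩
    have hinj : Set.InjOn (fun i => Function.update v i (v i + 1)) {i | ¬ v i = s - δ} := by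
      intro i _ i' _ h
      by_contra hne
      have h1 := congrFun h i
      simp only [Function.update_self, Function.update_of_ne hne] at h1
      omega
    have h2 : Nat.card {w : Fin (d + 1) → ℕ // inSimplifiedV d s δ w ∧ unitDist d v w} =
        ({i : Fin (d + 1) | ¬ v i = s - δ}).ncard := by
      rw [show Nat.card {w : Fin (d + 1) → ℕ // inSimplifiedV d s δ w ∧ unitDist d v w} =
          Nat.card {w : Fin (d + 1) → ℕ | inSimplifiedV d s δ w ∧ unitDist d v w} from rfl,
        Nat.card_coe_set_eq, hset, Set.ncard_image_of_injOn hinj]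
    rw [h2, Set.ncard_eq_toFinset_card', Set.toFinset_setOf, Nat.card_eq_fintype_card,
      Fintype.card_subtype]
    have h3 := Finset.card_filter_add_card_filter_not
      (s := (Finset.univ : Finset (Fin (d + 1)))) (p := fun i => v i = s - δ)
    simp only [Finset.card_univ, Fintype.card_fin] at h3
    omega
  · -- Part 3: degree of upper-level simplex vertices
    intro v hvs hvb
    have hset : {w | inSimplifiedV d s δ w ∧ unitDist d v w} =
        (fun i => Function.update v i (v i - 1)) '' {i | 0 < v i} := by
      ext w
      constructor
      · rintro ⟨⟨hwsum, hwb⟩, hwd⟩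
        obtain ⟨i, hoff, hcase⟩ := unitDist_iff.mp hwd
        have hsum := sum_off_eq hoff
        rcases hcase with hc | hc
        · exfalso
          omega
        · refine ⟨i, by simp only [Set.mem_setOf_eq]; omega, ?_⟩
          show Function.update v i (v i - 1) = w
          funext j
          rcases eq_or_ne j i with hji | hji
          · rw [hji, Function.update_self]
            omega
          · rw [Function.update_of_ne hji]
            exact (hoff j hji).symm
      · rintro ⟨i, hi, rfl⟩
        dsimp only
        simp only [Set.mem_setOf_eq] at hi
        have hoff : ∀ j, j ≠ i → Function.update v i (v i - 1) j = v j :=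
          fun j hj => Function.update_of_ne hj _ _
        have hsum := sum_off_eq hoff
        rw [Function.update_self] at hsum
        refine ⟨⟨Or.inl (by omega), fun j => ?_⟩, ?_⟩
        · rcases eq_or_ne j i with hji | hji
          · rw [hji, Function.update_self]
            have := hvb i
            omega
          · rw [Function.update_of_ne hji]
            exact hvb j
        · refine unitDist_iff.mpr ⟨i, hoff, Or.inr ?_⟩
          rw [Function.update_self]
          omega
    have hinj : Set.InjOn (fun i => Function.update v i (v i - 1)) {i | 0 < v i} := by
      intro i hi i' _ h
      by_contra hne
      have h1 := congrFun h i
      simp only [Function.update_self, Function.update_of_ne hne] at h1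
      simp only [Set.mem_setOf_eq] at hi
      omega
    have h2 : Nat.card {w : Fin (d + 1) → ℕ // inSimplifiedV d s δ w ∧ unitDist d v w} =
        ({i : Fin (d + 1) | 0 < v i}).ncard := by
      rw [show Nat.card {w : Fin (d + 1) → ℕ // inSimplifiedV d s δ w ∧ unitDist d v w} =
          Nat.card {w : Fin (d + 1) → ℕ | inSimplifiedV d s δ w ∧ unitDist d v w} from rfl,
        Nat.card_coe_set_eq, hset, Set.ncard_image_of_injOn hinj]
    rw [h2, Set.ncard_eq_toFinset_card', Set.toFinset_setOf]
end
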